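/- Let n, k be positive integers with 1 ≤ k ≤ n - 1 and 0 < p < 1. Then (√n/√(8·k·(n-k)))·e^{-n·D(k/n‖p)} ≤ b_{n,k}(p) < (√n/√(2π·k·(n-k)))·e^{-n·D(k/n‖p)}, and moreover (√n·φ₋(n,k)/√(k·(n-k)))·e^{-n·D(k/n‖p)} < b_{n,k}(p) < (√n·φ₊(n,k)/√(k·(n-k)))·e^{-n·D(k/n‖p)}. -/

import Mathlib

open Real

/-- Binomial probability `b_{n,k}(p)`. -/
noncomputable def b (n k : ℕ) (p : ℝ) : ℝ :=
  (n.choose k : ℝ) * p ^ k * (1 - p) ^ (n - k)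

/-- Relative entropy `D(f‖p)`. -/
noncomputable def D (f p : ℝ) : ℝ :=
  f * Real.log (f / p) + (1 - f) * Real.log ((1 - f) / (1 - p))

/-- `φ₊(n,k)`. -/
noncomputable def phiPlus (n k : ℝ) : ℝ :=
  1 / Real.sqrt (2 * Real.pi) *
    Real.exp (1 / (12 * n + 1) - 1 / (12 * k + 1) - 1 / (12 * (n - k) + 1))

/-- `φ₋(n,k)`. -/
noncomputable def phiMinus (n k : ℝ) : ℝ :=
  1 / Real.sqrt (2 * Real.pi) *
    Real.exp (1 / (12 * n) - 1 / (12 * k) - 1 / (12 * (n - k)))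

/-!
Write `n! = √(2πn) (n/e)ⁿ e^{r(n)}`, `r = stirlingError`. Then, exactly,
`b_{n,k}(p) = √n / √(2π k (n-k)) · e^{r(n) - r(k) - r(n-k)} · e^{-n D(k/n‖p)}`,
so all four bounds are bounds on `E = r(n) - r(k) - r(n-k)`. The series for `r(n) - r(n+1)` gives
strict versions of Robbins' stepwise bounds, so `1/(12n) - r(n)` and `r(n) - 1/(12n+1)` decrease
strictly to `0`; this yields `E < 0` and the two `φ±` exponents as strict bounds for `E`. For the
`1/√8` bound, `E ≥ log(√π/2)`, with equality at `k = n - k = 1`.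
-/

open Filter Topology
open scoped Nat

theorem StrictAntiOn.lt_of_tendsto {α : Type*} [Preorder α] [TopologicalSpace α]
    [OrderClosedTopology α] {ψ : ℕ → α} {a n : ℕ} {c : α}
    (hψ : StrictAntiOn ψ (Set.Ici a)) (hlim : Tendsto ψ atTop (𝓝 c)) (hn : a ≤ n) : c < ψ n := by
  have hanti : Antitone fun j ↦ ψ (j + (n + 1)) := fun i j hij ↦
    hψ.antitoneOn (Set.mem_Ici.2 (by omega)) (Set.mem_Ici.2 (by omega)) (by omega)
  exact (hanti.le_of_tendsto (hlim.comp (tendsto_add_atTop_nat (n + 1))) 0).trans_lt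
    (hψ hn (Set.mem_Ici.2 (by omega)) (by omega))

theorem tendsto_one_div_mul_add_nhds_zero {a : ℝ} (ha : 0 < a) (c : ℝ) :
    Tendsto (fun n : ℕ ↦ 1 / (a * n + c)) atTop (𝓝 0) := by
  simpa only [one_div, Pi.inv_def] using (tendsto_atTop_add_const_right _ c
    (tendsto_natCast_atTop_atTop.const_mul_atTop ha)).inv_tendsto_atTop

namespace Stirling

noncomputable def stirlingError (n : ℕ) : ℝ :=
  log (n ! / (√(2 * π * n) * (n / exp 1) ^ n))

theorem factorial_eq_mul_exp_stirlingError {n : ℕ} (hn : n ≠ 0) :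
    (n ! : ℝ) = √(2 * π * n) * (n / exp 1) ^ n * exp (stirlingError n) := by
  rw [stirlingError, exp_log (by positivity), mul_div_cancel₀ _ (by positivity)]

theorem stirlingError_succ (n : ℕ) :
    stirlingError (n + 1) = log (stirlingSeq (n + 1)) - log √π := by
  rw [← log_div (stirlingSeq'_pos n).ne' (by positivity), stirlingError, stirlingSeq, div_div,
    mul_right_comm (√_), ← sqrt_mul (by positivity), mul_right_comm 2 (_ : ℝ)]

theorem tendsto_stirlingError : Tendsto stirlingError atTop (𝓝 0) := by
  have h := ((continuousAt_log (sqrt_pos.2 pi_pos).ne').tendsto.comp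
    tendsto_stirlingSeq_sqrt_pi).sub_const (log √π)
  rw [sub_self, ← tendsto_add_atTop_iff_nat 1] at h
  simpa only [Function.comp_apply, ← stirlingError_succ, tendsto_add_atTop_iff_nat] using h

theorem hasSum_stirlingError_sub_succ (n : ℕ) :
    HasSum
      (fun j : ℕ ↦ (1 : ℝ) / (2 * (j + 1 : ℕ) + 1) * ((1 / (2 * (n + 1 : ℕ) + 1)) ^ 2) ^ (j + 1))
      (stirlingError (n + 1) - stirlingError (n + 2)) := by
  rw [stirlingError_succ, stirlingError_succ, sub_sub_sub_cancel_right]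
  exact log_stirlingSeq_sdiff_hasSum n

/-- Strict form of `Stirling.log_stirlingSeq_sdiff_le`: the coefficients `1 / (2j + 3)` are at
most `1/3`, strictly from `j = 1` on, and `∑ xʲ⁺¹ / 3 = 1 / (12 (n+1) (n+2))`. -/
theorem stirlingError_sub_succ_lt (n : ℕ) :
    stirlingError (n + 1) - stirlingError (n + 2) <
      1 / (12 * (n + 1 : ℕ)) - 1 / (12 * (n + 2 : ℕ)) := by
  set x : ℝ := (1 / (2 * (n + 1 : ℕ) + 1)) ^ 2 with hx
  have hx1 : x < 1 := by grw [hx, ← n.zero_le]; norm_num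
  have hgeo : HasSum (fun j ↦ x ^ (j + 1) / 3) (x * (1 - x)⁻¹ / 3) :=
    (((hasSum_geometric_of_lt_one (by positivity) hx1).mul_left x).div_const 3).congr_fun
      fun j ↦ by ring
  have hcoeff (j : ℕ) : (1 : ℝ) / (2 * (j + 1 : ℕ) + 1) ≤ 1 / 3 := by
    gcongr; norm_cast; omega
  refine (hasSum_lt (i := 1) (fun j ↦ ?_) ?_ (hasSum_stirlingError_sub_succ n) hgeo).trans_eq ?_
  · rw [div_eq_mul_one_div _ 3, mul_comm]
    exact mul_le_mul_of_nonneg_left (hcoeff j) (by positivity)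
  · rw [div_eq_mul_one_div _ 3, mul_comm]
    exact mul_lt_mul_of_pos_left (by norm_num) (by positivity)
  · have h1x : 1 - x = 4 * ((n : ℝ) + 1) * (n + 2) * x := by rw [hx]; push_cast; field_simp; ring
    have hx0 : x ≠ 0 := by positivity
    rw [h1x]; push_cast; field_simp; ring

/-- Already the first term of the series exceeds the difference on the left. -/
theorem lt_stirlingError_sub_succ (n : ℕ) :
    1 / (12 * (n + 1 : ℕ) + 1) - 1 / (12 * (n + 2 : ℕ) + 1) <
      stirlingError (n + 1) - stirlingError (n + 2) := by
  refine lt_of_lt_of_le ?_ (le_hasSum (hasSum_stirlingError_sub_succ n) 0 fun j _ ↦ by positivity)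
  push_cast
  rw [div_sub_div _ _ (by positivity) (by positivity), div_lt_iff₀ (by positivity)]
  field_simp
  nlinarith [n.cast_nonneg (α := ℝ)]

theorem strictAntiOn_one_div_sub_stirlingError :
    StrictAntiOn (fun n : ℕ ↦ 1 / (12 * (n : ℝ)) - stirlingError n) (Set.Ici 1) :=
  strictAntiOn_Ici_of_lt_pred fun m hm ↦ by
    obtain ⟨j, rfl⟩ : ∃ j, m = j + 2 := ⟨m - 2, by omega⟩
    show _ < 1 / (12 * ((j + 1 : ℕ) : ℝ)) - stirlingError (j + 1)
    linarith [stirlingError_sub_succ_lt j]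

theorem strictAntiOn_stirlingError_sub_one_div :
    StrictAntiOn (fun n : ℕ ↦ stirlingError n - 1 / (12 * (n : ℝ) + 1)) (Set.Ici 1) :=
  strictAntiOn_Ici_of_lt_pred fun m hm ↦ by
    obtain ⟨j, rfl⟩ : ∃ j, m = j + 2 := ⟨m - 2, by omega⟩
    show _ < stirlingError (j + 1) - 1 / (12 * ((j + 1 : ℕ) : ℝ) + 1)
    linarith [lt_stirlingError_sub_succ j]

theorem stirlingError_lt {n : ℕ} (hn : 0 < n) : stirlingError n < 1 / (12 * n) := by
  have hlim : Tendsto (fun n : ℕ ↦ 1 / (12 * (n : ℝ)) - stirlingError n) atTop (𝓝 0) := by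
    simpa using (tendsto_one_div_mul_add_nhds_zero (by norm_num) 0).sub tendsto_stirlingError
  exact sub_pos.1 (strictAntiOn_one_div_sub_stirlingError.lt_of_tendsto hlim hn)

theorem lt_stirlingError {n : ℕ} (hn : 0 < n) : 1 / (12 * n + 1) < stirlingError n := by
  have hlim :=
    tendsto_stirlingError.sub (tendsto_one_div_mul_add_nhds_zero (a := 12) (by norm_num) 1)
  rw [sub_zero] at hlim
  exact sub_pos.1 (strictAntiOn_stirlingError_sub_one_div.lt_of_tendsto hlim hn)

theorem stirlingError_add_sub_lt {k m : ℕ} (hk : 0 < k) (hm : 0 < m) :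
    stirlingError (k + m) - stirlingError k - stirlingError m <
      1 / (12 * ((k + m : ℕ) : ℝ) + 1) - 1 / (12 * k + 1) - 1 / (12 * m + 1) := by
  have hmono := strictAntiOn_stirlingError_sub_one_div.antitoneOn (Set.mem_Ici.2 hk)
    (Set.mem_Ici.2 (hk.trans_le (k.le_add_right m))) (k.le_add_right m)
  linarith [lt_stirlingError hm]

theorem lt_stirlingError_add_sub {k m : ℕ} (hk : 0 < k) (hm : 0 < m) :
    1 / (12 * ((k + m : ℕ) : ℝ)) - 1 / (12 * k) - 1 / (12 * m) <
      stirlingError (k + m) - stirlingError k - stirlingError m := by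
  have hmono := strictAntiOn_one_div_sub_stirlingError.antitoneOn (Set.mem_Ici.2 hk)
    (Set.mem_Ici.2 (hk.trans_le (k.le_add_right m))) (k.le_add_right m)
  linarith [stirlingError_lt hm]

theorem stirlingError_add_sub_neg {k m : ℕ} (hk : 0 < k) (hm : 0 < m) :
    stirlingError (k + m) - stirlingError k - stirlingError m < 0 := by
  have : 1 / (12 * ((k + m : ℕ) : ℝ) + 1) ≤ 1 / (12 * (k : ℝ) + 1) := by
    gcongr; exact_mod_cast k.le_add_right m
  linarith [stirlingError_add_sub_lt hk hm, one_div_pos.2 (by positivity : 0 < 12 * (m : ℝ) + 1)]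

theorem stirlingError_two_sub_two_mul_one :
    stirlingError 2 - 2 * stirlingError 1 = log (√π / 2) := by
  have h4 : √(2 * π * 2) = 2 * √π := by
    rw [mul_comm, ← mul_assoc, sqrt_mul (by norm_num), show (2 * 2 : ℝ) = 2 ^ 2 by norm_num,
      sqrt_sq (by norm_num)]
  rw [two_mul, stirlingError, stirlingError, ← log_mul (by positivity) (by positivity),
    ← log_div (by positivity) (by positivity)]
  congr 1
  norm_num [h4]
  field_simp
  norm_num

theorem log_sqrt_pi_div_two_lt : log (√π / 2) < -7 / 72 := by
  have hsqrt : √π < 9 / 5 := (sqrt_lt' (by norm_num)).2 (by linarith [pi_lt_d2])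
  linarith [log_le_sub_one_of_pos (by positivity : 0 < √π / 2)]

/-- Away from `k = m = 1` the lower bound `lt_stirlingError_add_sub` is at least `-7/72`
(attained at `{k, m} = {1, 2}`), already above `log (√π / 2) ≈ -0.121`. -/
theorem log_sqrt_pi_div_two_le_stirlingError_add_sub {k m : ℕ} (hk : 0 < k) (hm : 0 < m) :
    log (√π / 2) ≤ stirlingError (k + m) - stirlingError k - stirlingError m := by
  by_cases h11 : k = 1 ∧ m = 1
  · obtain ⟨rfl, rfl⟩ := h11
    linarith [stirlingError_two_sub_two_mul_one]
  have hkm : (3 : ℝ) ≤ k + m := by norm_cast; omega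
  have hk1 : (1 : ℝ) ≤ k := by exact_mod_cast hk
  have hm1 : (1 : ℝ) ≤ m := by exact_mod_cast hm
  have harith :
      -7 / 72 ≤ 1 / (12 * ((k + m : ℕ) : ℝ)) - 1 / (12 * k) - 1 / (12 * m) := by
    push_cast
    rw [div_sub_div _ _ (by positivity) (by positivity),
      div_sub_div _ _ (by positivity) (by positivity), le_div_iff₀ (by positivity)]
    nlinarith [mul_nonneg (sub_nonneg.2 hk1) (sub_nonneg.2 hm1),
      mul_nonneg (sub_nonneg.2 hkm) (sub_nonneg.2 hkm),
      mul_nonneg (mul_nonneg (sub_nonneg.2 hk1) (sub_nonneg.2 hm1)) (sub_nonneg.2 hkm)]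
  linarith [log_sqrt_pi_div_two_lt, lt_stirlingError_add_sub hk hm]

end Stirling

open Stirling

theorem exp_neg_mul_D {k m : ℕ} (hk : 0 < k) (hm : 0 < m) {p : ℝ} (hp0 : 0 < p) (hp1 : p < 1) :
    exp (-(((k + m : ℕ) : ℝ) * D (k / ((k + m : ℕ) : ℝ)) p)) =
      ((k + m : ℕ) : ℝ) ^ (k + m) * p ^ k * (1 - p) ^ m / ((k : ℝ) ^ k * (m : ℝ) ^ m) := by
  set N : ℝ := ((k + m : ℕ) : ℝ) with hN
  have hN0 : 0 < N := by positivity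
  have hq : 0 < 1 - p := sub_pos.2 hp1
  have hfrac : 1 - k / N = m / N := by rw [hN]; push_cast; field_simp; ring
  have hexponent :
      -(N * D (k / N) p) = log ((N * p / k) ^ k) + log ((N * (1 - p) / m) ^ m) := by
    rw [D, hfrac, div_div, div_div, log_pow, log_pow, ← inv_div (N * p), log_inv,
      ← inv_div (N * (1 - p)), log_inv]
    field_simp
    ring
  rw [hexponent, exp_add, exp_log (by positivity), exp_log (by positivity), div_pow, div_pow,
    mul_pow, mul_pow, pow_add]
  field_simp

theorem b_add_eq_stirling {k m : ℕ} (hk : 0 < k) (hm : 0 < m) {p : ℝ} (hp0 : 0 < p)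
    (hp1 : p < 1) :
    b (k + m) k p = exp (stirlingError (k + m) - stirlingError k - stirlingError m) / √(2 * π) *
      (√((k + m : ℕ) : ℝ) / √((k : ℝ) * m) *
        exp (-(((k + m : ℕ) : ℝ) * D (k / ((k + m : ℕ) : ℝ)) p))) := by
  rw [exp_neg_mul_D hk hm hp0 hp1, b, Nat.add_sub_cancel_left,
    Nat.cast_choose ℝ (k.le_add_right m), Nat.add_sub_cancel_left,
    factorial_eq_mul_exp_stirlingError (by omega), factorial_eq_mul_exp_stirlingError hk.ne',
    factorial_eq_mul_exp_stirlingError hm.ne', exp_sub, exp_sub,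
    sqrt_mul (by positivity) ((k + m : ℕ) : ℝ), sqrt_mul (by positivity) (k : ℝ),
    sqrt_mul (by positivity) (m : ℝ), sqrt_mul (by positivity) (m : ℝ), div_pow, div_pow,
    div_pow]
  field_simp
  ring

theorem binomial_point_probability_bounds
    (n k : ℕ) (hk : 1 ≤ k) (hkn : k ≤ n - 1) (p : ℝ) (hp0 : 0 < p) (hp1 : p < 1) :
    (Real.sqrt n / Real.sqrt (8 * k * ((n : ℝ) - k)) *
        Real.exp (-(n * D ((k : ℝ) / n) p)) ≤ b n k p ∧
      b n k p < Real.sqrt n / Real.sqrt (2 * Real.pi * k * ((n : ℝ) - k)) *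
        Real.exp (-(n * D ((k : ℝ) / n) p))) ∧
    (Real.sqrt n * phiMinus n k / Real.sqrt (k * ((n : ℝ) - k)) *
        Real.exp (-(n * D ((k : ℝ) / n) p)) < b n k p ∧
      b n k p < Real.sqrt n * phiPlus n k / Real.sqrt (k * ((n : ℝ) - k)) *
        Real.exp (-(n * D ((k : ℝ) / n) p))) := by
  obtain ⟨m, hm, rfl⟩ : ∃ m, 0 < m ∧ n = k + m := ⟨n - k, by omega, by omega⟩
  have hsub : ((k + m : ℕ) : ℝ) - k = m := by push_cast; ring
  rw [hsub, mul_assoc 8, mul_assoc (2 * π), sqrt_mul (by norm_num : (0 : ℝ) ≤ 8),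
    sqrt_mul (by positivity : 0 ≤ 2 * π), b_add_eq_stirling hk hm hp0 hp1, phiMinus, phiPlus,
    hsub]
  set Q := √((k + m : ℕ) : ℝ) / √((k : ℝ) * m) *
    exp (-(((k + m : ℕ) : ℝ) * D (k / ((k + m : ℕ) : ℝ)) p)) with hQ
  have hQ0 : 0 < Q := by positivity
  set E := stirlingError (k + m) - stirlingError k - stirlingError m
  have hsqrt8 : √8 = 2 * √(2 * π) / √π := by
    rw [sqrt_mul zero_le_two, show (8 : ℝ) = 2 ^ 2 * 2 by norm_num, sqrt_mul (by positivity),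
      sqrt_sq zero_le_two]
    field_simp
  have hE : √π / 2 ≤ exp E := by
    rw [← exp_log (by positivity : 0 < √π / 2)]
    exact exp_le_exp.2 (log_sqrt_pi_div_two_le_stirlingError_add_sub hk hm)
  refine ⟨⟨?_, ?_⟩, ?_, ?_⟩
  · calc _ = √π / 2 / √(2 * π) * Q := by rw [hQ, hsqrt8]; field_simp
      _ ≤ exp E / √(2 * π) * Q := by gcongr
  · calc _ < 1 / √(2 * π) * Q := by
          gcongr; exact exp_lt_one_iff.2 (stirlingError_add_sub_neg hk hm)
      _ = _ := by rw [hQ]; ring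
  · calc
      _ = exp (1 / (12 * ((k + m : ℕ) : ℝ)) - 1 / (12 * k) - 1 / (12 * m)) / √(2 * π) * Q := by
        rw [hQ]; ring
      _ < exp E / √(2 * π) * Q := by gcongr; exact lt_stirlingError_add_sub hk hm
  · calc
      _ < exp (1 / (12 * ((k + m : ℕ) : ℝ) + 1) - 1 / (12 * k + 1) - 1 / (12 * m + 1)) /
          √(2 * π) * Q := by
        gcongr; exact stirlingError_add_sub_lt hk hm
      _ = _ := by rw [hQ]; ring
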